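/- Let h > 0 be real and let 𝓛 = 𝓛₁ ∪ 𝓛₂ ∪ 𝓛₃ ⊂ ℂ, where 𝓛₁ = {l : −1/2 < Re l < 0, Im l = 0}, 𝓛₂ = {l : Re l = −1/2, 0 ≤ Im l < π/h}, 𝓛₃ = {l : Re l > −1/2, Im l = π/h}. Let V^{(l)} be the space of finitely supported functions ℤ → ℂ with basis (e_k), equipped with X⁺ e_k = (sinh((k−l)h/2)/sinh(h/2)) e_{k+1}, X⁻ e_k = −(sinh((k+l)h/2)/sinh(h/2)) e_{k−1}, H e_k = 2k e_k. Then for every l ∈ 𝓛 there exists a unique sesquilinear form B on V^{(l)} (linear in the first argument, conjugate-linear in the second, with B(v,u) = conj(B(u,v))) such that B(e₀,e₀) = 1 and B is invariant: B(X⁺u, v) = −B(u, X⁻v), B(X⁻u, v) = −B(u, X⁺v) and B(Hu, v) = B(u, Hv) for all u, v ∈ V^{(l)}. Moreover this form is diagonal and positive definite: B(e_i, e_j) = 0 for i ≠ j and B(e_k, e_k) > 0 for every k ∈ ℤ. -/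

import Mathlib

/-- The operator `X⁺ e_k = (sinh((k−l)h/2)/sinh(h/2)) e_{k+1}` on `V^{(l)} = ℤ →₀ ℂ`. -/
noncomputable def Xplus (h : ℝ) (l : ℂ) : (ℤ →₀ ℂ) →ₗ[ℂ] (ℤ →₀ ℂ) :=
  Finsupp.lsum ℂ fun k =>
    (Complex.sinh (((k : ℂ) - l) * h / 2) / Complex.sinh (h / 2)) • Finsupp.lsingle (k + 1)

/-- The operator `X⁻ e_k = −(sinh((k+l)h/2)/sinh(h/2)) e_{k−1}` on `V^{(l)} = ℤ →₀ ℂ`. -/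
noncomputable def Xminus (h : ℝ) (l : ℂ) : (ℤ →₀ ℂ) →ₗ[ℂ] (ℤ →₀ ℂ) :=
  Finsupp.lsum ℂ fun k =>
    (-(Complex.sinh (((k : ℂ) + l) * h / 2) / Complex.sinh (h / 2))) • Finsupp.lsingle (k - 1)

/-- The operator `H e_k = 2k e_k` on `V^{(l)} = ℤ →₀ ℂ`. -/
noncomputable def Hop : (ℤ →₀ ℂ) →ₗ[ℂ] (ℤ →₀ ℂ) :=
  Finsupp.lsum ℂ fun k => ((2 * k : ℤ) : ℂ) • Finsupp.lsingle k

/-!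
Invariance under `H` forces `B(e_i, e_j) = 0` for `i ≠ j`, and invariance under `X⁺` evaluated on
`(e_k, e_{k+1})` forces `sinh((k−l)h/2) B(e_{k+1}, e_{k+1}) = conj(sinh((k+1+l)h/2)) B(e_k, e_k)`.
For `l ∈ 𝓛` the ratio `conj(sinh((k+1+l)h/2)) / sinh((k−l)h/2)` is a positive real number for every
`k` (in the three series respectively: a quotient of two real `sinh`s of the same sign, exactly `1`,
a quotient of two `cosh`s), so the normalisation `B(e₀, e₀) = 1` determines `B`, and the positive
solution of the recurrence does define an invariant form: the `X⁻` condition is the complex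
conjugate of the `X⁺` one.
-/

open Complex ComplexConjugate ComplexOrder Finsupp LinearMap

theorem LinearMap.isAdjointPair_of_basis {ι R M P : Type*} [CommSemiring R] [AddCommMonoid M]
    [Module R M] [AddCommMonoid P] [Module R P] {I : R →+* R} (e : Module.Basis ι R M)
    {B : M →ₗ[R] M →ₛₗ[I] P} {f g : M →ₗ[R] M}
    (h : ∀ i j, B (f (e i)) (e j) = B (e i) (g (e j))) : IsAdjointPair B B f g :=
  isAdjointPair_iff_comp_eq_compl₂.2 (ext_basis e e h)

theorem Int.eq_of_mul_succ_eq_mul {K : Type*} [MonoidWithZero K] [IsLeftCancelMulZero K]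
    {α β f g : ℤ → K}
    (hα : ∀ k, α k ≠ 0) (hβ : ∀ k, β k ≠ 0) (hf : ∀ k, α k * f (k + 1) = β k * f k)
    (hg : ∀ k, α k * g (k + 1) = β k * g k) (h0 : f 0 = g 0) : f = g := by
  funext k
  induction k using Int.induction_on with
  | zero => exact h0
  | succ k ih => exact mul_left_cancel₀ (hα k) (by rw [hf, hg, ih])
  | pred k ih =>
    refine mul_left_cancel₀ (hβ (-k - 1)) ?_
    rw [← hf, ← hg, sub_add_cancel, ih]

theorem Int.exists_pos_succ_eq_mul (ρ : ℤ → ℝ) (hρ : ∀ k, 0 < ρ k) :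
    ∃ b : ℤ → ℝ, b 0 = 1 ∧ (∀ k, 0 < b k) ∧ ∀ k, b (k + 1) = ρ k * b k := by
  let b : ℤ → ℝ := fun k =>
    k.inductionOn' 0 1 (fun j _ x => ρ j * x) (fun j _ x => x / ρ (j - 1))
  have hb : ∀ k, b (k + 1) = ρ k * b k := by
    intro k
    rcases le_or_gt 0 k with hk | hk
    · exact Int.inductionOn'_add_one hk
    · have hdown := Int.inductionOn'_sub_one (z := k + 1) (b := 0) (zero := (1 : ℝ))
        (succ := fun j _ x => ρ j * x) (pred := fun j _ x => x / ρ (j - 1)) (by omega)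
      simp only [add_sub_cancel_right] at hdown
      change b k = b (k + 1) / ρ k at hdown
      rw [hdown, mul_div_cancel₀ _ (hρ k).ne']
  have hb0 : b 0 = 1 := Int.inductionOn'_self
  refine ⟨b, hb0, fun k => ?_, hb⟩
  induction k using Int.induction_on with
  | zero => rw [hb0]; exact one_pos
  | succ k ih => rw [hb]; exact mul_pos (hρ k) ih
  | pred k ih =>
    have hsucc := hb (-k - 1)
    rw [sub_add_cancel] at hsucc
    rw [hsucc] at ih
    exact pos_of_mul_pos_right ih (hρ _).le

theorem LinearMap.isAdjointPair_neg_iff {R M P : Type*} [CommRing R] [AddCommGroup M] [Module R M]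
    [AddCommGroup P] [Module R P] {I : R →+* R} {B : M →ₗ[R] M →ₛₗ[I] P} {f g : M →ₗ[R] M} :
    IsAdjointPair B B f ⇑(-g) ↔ ∀ u v, B (f u) v = -B u (g v) := by
  simp [IsAdjointPair]

section DiagonalForm

variable {ι : Type*}

/-- `diagForm b u v = ∑ i, b i * u i * conj (v i)`. -/
noncomputable def diagForm (b : ι → ℝ) : (ι →₀ ℂ) →ₗ[ℂ] (ι →₀ ℂ) →ₛₗ[starRingEnd ℂ] ℂ :=
  Finsupp.lsum ℂ fun i =>
    toSpanSingleton ℂ _ ((b i : ℂ) • ((starLinearEquiv ℂ : ℂ ≃ₗ⋆[ℂ] ℂ).toLinearMap ∘ₛₗ lapply i))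

theorem diagForm_single_self (b : ι → ℝ) (i : ι) :
    diagForm b (single i 1) (single i 1) = b i := by
  simp [diagForm]

theorem diagForm_single_of_ne (b : ι → ℝ) {i j : ι} (hij : i ≠ j) :
    diagForm b (single i 1) (single j 1) = 0 := by
  simp [diagForm, single_eq_of_ne hij]

theorem isSymm_flip_diagForm (b : ι → ℝ) : (diagForm b).flip.IsSymm := by
  refine (isSymm_iff_basis Finsupp.basisSingleOne).2 fun i j => ?_
  rcases eq_or_ne i j with rfl | hij
  · simp [diagForm_single_self]
  · simp [diagForm_single_of_ne, hij, Ne.symm hij]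

end DiagonalForm

theorem Real.sinh_div_sinh_pos {x y : ℝ} (hxy : 0 < x * y) : 0 < sinh x / sinh y := by
  rcases mul_pos_iff.1 hxy with ⟨hx, hy⟩ | ⟨hx, hy⟩
  · exact div_pos (sinh_pos_iff.2 hx) (sinh_pos_iff.2 hy)
  · exact div_pos_of_neg_of_neg (sinh_neg_iff.2 hx) (sinh_neg_iff.2 hy)

theorem Complex.sinh_ne_zero_of_re_ne_zero {z : ℂ} (hz : z.re ≠ 0) : sinh z ≠ 0 := by
  intro h0
  obtain ⟨n, hn⟩ := sin_eq_zero_iff.1 (by rw [sin_mul_I, h0, zero_mul] : sin (z * I) = 0)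
  apply hz
  simpa using congrArg im hn

theorem Complex.sinh_sub_pi_div_two_mul_I (z : ℂ) : sinh (z - Real.pi / 2 * I) = -(cosh z * I) := by
  simp [sinh_sub, sinh_mul_I, cosh_mul_I]

noncomputable def plusCoeff (h : ℝ) (l : ℂ) (k : ℤ) : ℂ := sinh (((k : ℂ) - l) * h / 2)

noncomputable def minusCoeff (h : ℝ) (l : ℂ) (k : ℤ) : ℂ := sinh (((k : ℂ) + l) * h / 2)

theorem Xplus_single (h : ℝ) (l : ℂ) (k : ℤ) (c : ℂ) :
    Xplus h l (single k c) = (plusCoeff h l k / sinh (h / 2)) • single (k + 1) c := by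
  simp [Xplus, plusCoeff]

theorem Xminus_single (h : ℝ) (l : ℂ) (k : ℤ) (c : ℂ) :
    Xminus h l (single k c) = -(minusCoeff h l k / sinh (h / 2)) • single (k - 1) c := by
  simp [Xminus, minusCoeff]

theorem Hop_single (k : ℤ) (c : ℂ) : Hop (single k c) = ((2 * k : ℤ) : ℂ) • single k c := by
  simp [Hop]

theorem conj_sinh_ofReal_div_two (h : ℝ) : conj (sinh (h / 2 : ℂ)) = sinh (h / 2) := by
  rw [← sinh_conj, map_div₀, conj_ofReal, map_ofNat]

theorem isAdjointPair_diagForm_Hop (b : ℤ → ℝ) :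
    IsAdjointPair (diagForm b) (diagForm b) Hop Hop := by
  refine isAdjointPair_of_basis Finsupp.basisSingleOne fun i j => ?_
  simp only [coe_basisSingleOne, Hop_single, map_smul, LinearMap.smul_apply, map_smulₛₗ,
    smul_eq_mul, map_intCast]
  rcases eq_or_ne i j with rfl | hij
  · rfl
  · simp [diagForm_single_of_ne b hij]

theorem apply_single_eq_zero_of_Hop
    {B : (ℤ →₀ ℂ) →ₗ[ℂ] (ℤ →₀ ℂ) →ₛₗ[starRingEnd ℂ] ℂ} (hH : IsAdjointPair B B Hop Hop)
    {i j : ℤ} (hij : i ≠ j) : B (single i 1) (single j 1) = 0 := by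
  have h := hH (single i 1) (single j 1)
  simp only [Hop_single, map_smul, LinearMap.smul_apply, map_smulₛₗ, smul_eq_mul, map_intCast] at h
  have hne : ((2 * i : ℤ) : ℂ) - ((2 * j : ℤ) : ℂ) ≠ 0 :=
    sub_ne_zero.2 (by exact_mod_cast (by omega : 2 * i ≠ 2 * j))
  exact (mul_eq_zero.1 (by linear_combination h)).resolve_left hne

/-- The ratio `B(e_{k+1}, e_{k+1}) / B(e_k, e_k)` that `X⁺`-invariance forces on a form `B`. -/
noncomputable def weightRatio (h : ℝ) (l : ℂ) (k : ℤ) : ℂ :=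
  conj (minusCoeff h l (k + 1)) / plusCoeff h l k

section WeightRatio

variable {h : ℝ} {l : ℂ}

theorem weightRatio_pos_of_im_eq_zero (hh : h ≠ 0) (hre : -1 < l.re) (hre' : l.re < 0)
    (him : l.im = 0) (k : ℤ) : 0 < weightRatio h l k := by
  obtain ⟨x, rfl⟩ : ∃ x : ℝ, l = x := ⟨l.re, Complex.ext rfl (by simpa using him)⟩
  simp only [ofReal_re] at hre hre'
  have hk : 0 < ((k : ℝ) + 1 + x) * ((k : ℝ) - x) := by
    rcases le_or_gt 0 k with hk | hk
    · have : (0 : ℝ) ≤ k := by exact_mod_cast hk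
      nlinarith
    · have : (k : ℝ) ≤ -1 := by exact_mod_cast (by omega : k ≤ -1)
      nlinarith
  have hr : weightRatio h x k =
      ↑(Real.sinh (((k : ℝ) + 1 + x) * h / 2) / Real.sinh (((k : ℝ) - x) * h / 2)) := by
    simp only [weightRatio, minusCoeff, plusCoeff, ← sinh_conj]
    push_cast
    simp [conj_ofReal, map_ofNat]
  rw [hr, zero_lt_real]
  refine Real.sinh_div_sinh_pos ?_
  have : 0 < h ^ 2 / 4 := by positivity
  nlinarith

theorem weightRatio_pos_of_re_eq_neg_half (hh : h ≠ 0) (hre : l.re = -1 / 2) (k : ℤ) :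
    0 < weightRatio h l k := by
  have hconj : conj (minusCoeff h l (k + 1)) = plusCoeff h l k := by
    have hl : conj l = -1 - l := Complex.ext (by simp [hre]; norm_num) (by simp)
    rw [minusCoeff, plusCoeff, ← sinh_conj]
    congr 1
    simp only [map_div₀, map_mul, map_add, map_intCast, conj_ofReal, map_ofNat, hl]
    push_cast
    ring
  have hne : plusCoeff h l k ≠ 0 := by
    refine sinh_ne_zero_of_re_ne_zero ?_
    have hk : (2 * k + 1 : ℝ) ≠ 0 := by exact_mod_cast (by omega : 2 * k + 1 ≠ 0)
    simp [hre, hh]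
    contrapose! hk
    linarith
  rw [weightRatio, hconj, div_self hne]
  exact one_pos

theorem weightRatio_pos_of_im_eq_pi_div (hh : h ≠ 0) (him : l.im = Real.pi / h) (k : ℤ) :
    0 < weightRatio h l k := by
  obtain ⟨x, rfl⟩ : ∃ x : ℝ, l = x + (Real.pi / h : ℝ) * I :=
    ⟨l.re, by rw [← him]; exact (re_add_im l).symm⟩
  have hα : plusCoeff h (x + (Real.pi / h : ℝ) * I) k =
      -(Real.cosh (((k : ℝ) - x) * h / 2) * I) := by
    rw [plusCoeff, ofReal_cosh, ← sinh_sub_pi_div_two_mul_I]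
    congr 1
    push_cast; field_simp; ring
  have hβ : conj (minusCoeff h (x + (Real.pi / h : ℝ) * I) (k + 1)) =
      -(Real.cosh (((k : ℝ) + 1 + x) * h / 2) * I) := by
    rw [minusCoeff, ← sinh_conj, ofReal_cosh, ← sinh_sub_pi_div_two_mul_I]
    congr 1
    simp only [map_div₀, map_mul, map_add, map_intCast, conj_ofReal, conj_I, map_ofNat]
    push_cast; field_simp; ring
  rw [weightRatio, hα, hβ, neg_div_neg_eq, mul_div_mul_right _ _ I_ne_zero, ← ofReal_div,
    zero_lt_real]
  exact div_pos (Real.cosh_pos _) (Real.cosh_pos _)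

end WeightRatio

def IsInvariantScalarProduct (h : ℝ) (l : ℂ)
    (B : (ℤ →₀ ℂ) →ₗ[ℂ] (ℤ →₀ ℂ) →ₛₗ[starRingEnd ℂ] ℂ) : Prop :=
  (∀ u v, B v u = conj (B u v)) ∧ B (single 0 1) (single 0 1) = 1 ∧
    (∀ u v, B (Xplus h l u) v = -B u (Xminus h l v)) ∧
    (∀ u v, B (Xminus h l u) v = -B u (Xplus h l v)) ∧
    (∀ u v, B (Hop u) v = B u (Hop v))

section Invariance

variable {h : ℝ} {l : ℂ} {b : ℤ → ℝ}

theorem isAdjointPair_diagForm_Xplus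
    (hb : ∀ k, plusCoeff h l k * (b (k + 1) : ℂ) = conj (minusCoeff h l (k + 1)) * b k) :
    IsAdjointPair (diagForm b) (diagForm b) (Xplus h l) ⇑(-Xminus h l) := by
  refine isAdjointPair_of_basis Finsupp.basisSingleOne fun i j => ?_
  simp only [coe_basisSingleOne, Xplus_single, LinearMap.neg_apply, Xminus_single, neg_smul,
    neg_neg, map_smul, LinearMap.smul_apply, map_smulₛₗ, smul_eq_mul, map_div₀,
    conj_sinh_ofReal_div_two]
  rcases eq_or_ne j (i + 1) with rfl | hj
  · rw [add_sub_cancel_right, diagForm_single_self, diagForm_single_self]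
    linear_combination hb i / sinh (h / 2 : ℂ)
  · rw [diagForm_single_of_ne b (Ne.symm hj), diagForm_single_of_ne b (by omega : i ≠ j - 1)]
    simp

theorem isAdjointPair_diagForm_Xminus
    (hb : ∀ k, plusCoeff h l k * (b (k + 1) : ℂ) = conj (minusCoeff h l (k + 1)) * b k) :
    IsAdjointPair (diagForm b) (diagForm b) (Xminus h l) ⇑(-Xplus h l) := by
  refine isAdjointPair_of_basis Finsupp.basisSingleOne fun i j => ?_
  simp only [coe_basisSingleOne, Xminus_single, LinearMap.neg_apply, Xplus_single, neg_smul,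
    map_neg, map_smul, LinearMap.smul_apply, map_smulₛₗ, smul_eq_mul, map_div₀,
    conj_sinh_ofReal_div_two]
  rcases eq_or_ne i (j + 1) with rfl | hi
  · rw [add_sub_cancel_right, diagForm_single_self, diagForm_single_self]
    have hb' := congrArg conj (hb j)
    simp only [map_mul, conj_conj, conj_ofReal] at hb'
    linear_combination hb' / sinh (h / 2 : ℂ)
  · rw [diagForm_single_of_ne b (by omega : i - 1 ≠ j),
      diagForm_single_of_ne b (by omega : i ≠ j + 1)]
    simp

theorem exists_pos_weights (hr : ∀ k, 0 < weightRatio h l k) :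
    ∃ b : ℤ → ℝ, b 0 = 1 ∧ (∀ k, 0 < b k) ∧
      ∀ k, plusCoeff h l k * (b (k + 1) : ℂ) = conj (minusCoeff h l (k + 1)) * b k := by
  obtain ⟨b, hb0, hbpos, hb⟩ :=
    Int.exists_pos_succ_eq_mul (fun k => (weightRatio h l k).re) fun k => (pos_iff.1 (hr k)).1
  refine ⟨b, hb0, hbpos, fun k => ?_⟩
  have hρ : ((weightRatio h l k).re : ℂ) = weightRatio h l k :=
    Complex.ext rfl (by simpa using (pos_iff.1 (hr k)).2)
  have ha : plusCoeff h l k ≠ 0 := (div_ne_zero_iff.1 (hr k).ne').2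
  rw [hb, ofReal_mul, hρ, weightRatio]
  field_simp

theorem plusCoeff_mul_apply_single_succ (hh : h ≠ 0)
    {B : (ℤ →₀ ℂ) →ₗ[ℂ] (ℤ →₀ ℂ) →ₛₗ[starRingEnd ℂ] ℂ}
    (hX : IsAdjointPair B B (Xplus h l) ⇑(-Xminus h l)) (k : ℤ) :
    plusCoeff h l k * B (single (k + 1) 1) (single (k + 1) 1) =
      conj (minusCoeff h l (k + 1)) * B (single k 1) (single k 1) := by
  have hs : sinh (h / 2 : ℂ) ≠ 0 := sinh_ne_zero_of_re_ne_zero (by simpa using hh)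
  have H := hX (single k 1) (single (k + 1) 1)
  simp only [Xplus_single, LinearMap.neg_apply, Xminus_single, neg_smul, neg_neg,
    add_sub_cancel_right, map_smul, LinearMap.smul_apply, map_smulₛₗ, smul_eq_mul, map_div₀,
    conj_sinh_ofReal_div_two] at H
  field_simp at H
  linear_combination H

theorem isInvariantScalarProduct_diagForm (hb0 : b 0 = 1)
    (hb : ∀ k, plusCoeff h l k * (b (k + 1) : ℂ) = conj (minusCoeff h l (k + 1)) * b k) :
    IsInvariantScalarProduct h l (diagForm b) :=
  ⟨fun u v => ((isSymm_flip_diagForm b).eq v u).symm, by simp [diagForm_single_self, hb0],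
    isAdjointPair_neg_iff.1 (isAdjointPair_diagForm_Xplus hb),
    isAdjointPair_neg_iff.1 (isAdjointPair_diagForm_Xminus hb), isAdjointPair_diagForm_Hop b⟩

theorem IsInvariantScalarProduct.eq_diagForm {B : (ℤ →₀ ℂ) →ₗ[ℂ] (ℤ →₀ ℂ) →ₛₗ[starRingEnd ℂ] ℂ}
    (hB : IsInvariantScalarProduct h l B) (hh : h ≠ 0) (hr : ∀ k, 0 < weightRatio h l k)
    (hb0 : b 0 = 1)
    (hb : ∀ k, plusCoeff h l k * (b (k + 1) : ℂ) = conj (minusCoeff h l (k + 1)) * b k) :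
    B = diagForm b := by
  obtain ⟨-, hB0, hX, -, hH⟩ := hB
  have hdiag : (fun k => B (single k 1) (single k 1)) = fun k => (b k : ℂ) :=
    Int.eq_of_mul_succ_eq_mul (fun k => (div_ne_zero_iff.1 (hr k).ne').2)
      (fun k => (div_ne_zero_iff.1 (hr k).ne').1)
      (plusCoeff_mul_apply_single_succ hh (isAdjointPair_neg_iff.2 hX)) hb (by simp [hB0, hb0])
  refine ext_basis Finsupp.basisSingleOne Finsupp.basisSingleOne fun i j => ?_
  rcases eq_or_ne i j with rfl | hij
  · simpa [diagForm_single_self] using congrFun hdiag i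
  · simp [apply_single_eq_zero_of_Hop hH hij, diagForm_single_of_ne b hij]

end Invariance

/-- For `l` in the set `𝓛 = 𝓛₁ ∪ 𝓛₂ ∪ 𝓛₃` there is a unique invariant hermitian
sesquilinear form `B` on `V^{(l)}` with `B(e₀,e₀) = 1`; moreover any such form is
diagonal and positive definite on the basis `(e_k)`. -/
theorem exists_unique_invariant_scalar_product (h : ℝ) (hh : 0 < h) (l : ℂ)
    (hl : (-(1 : ℝ) / 2 < l.re ∧ l.re < 0 ∧ l.im = 0) ∨
          (l.re = -(1 : ℝ) / 2 ∧ 0 ≤ l.im ∧ l.im < Real.pi / h) ∨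
          (-(1 : ℝ) / 2 < l.re ∧ l.im = Real.pi / h)) :
    (∃! B : (ℤ →₀ ℂ) →ₗ[ℂ] (ℤ →₀ ℂ) →ₛₗ[starRingEnd ℂ] ℂ,
      (∀ u v : ℤ →₀ ℂ, B v u = (starRingEnd ℂ) (B u v)) ∧
      B (Finsupp.single 0 1) (Finsupp.single 0 1) = 1 ∧
      (∀ u v : ℤ →₀ ℂ, B (Xplus h l u) v = -B u (Xminus h l v)) ∧
      (∀ u v : ℤ →₀ ℂ, B (Xminus h l u) v = -B u (Xplus h l v)) ∧
      (∀ u v : ℤ →₀ ℂ, B (Hop u) v = B u (Hop v))) ∧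
    (∀ B : (ℤ →₀ ℂ) →ₗ[ℂ] (ℤ →₀ ℂ) →ₛₗ[starRingEnd ℂ] ℂ,
      ((∀ u v : ℤ →₀ ℂ, B v u = (starRingEnd ℂ) (B u v)) ∧
       B (Finsupp.single 0 1) (Finsupp.single 0 1) = 1 ∧
       (∀ u v : ℤ →₀ ℂ, B (Xplus h l u) v = -B u (Xminus h l v)) ∧
       (∀ u v : ℤ →₀ ℂ, B (Xminus h l u) v = -B u (Xplus h l v)) ∧
       (∀ u v : ℤ →₀ ℂ, B (Hop u) v = B u (Hop v))) →
      (∀ i j : ℤ, i ≠ j → B (Finsupp.single i 1) (Finsupp.single j 1) = 0) ∧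
      (∀ k : ℤ, ∃ r : ℝ, 0 < r ∧ B (Finsupp.single k 1) (Finsupp.single k 1) = r)) := by
  have hr : ∀ k, 0 < weightRatio h l k := by
    rcases hl with ⟨hre, hre', him⟩ | ⟨hre, -, -⟩ | ⟨-, him⟩
    · exact weightRatio_pos_of_im_eq_zero hh.ne' (by linarith) hre' him
    · exact weightRatio_pos_of_re_eq_neg_half hh.ne' (by simpa using hre)
    · exact weightRatio_pos_of_im_eq_pi_div hh.ne' him
  obtain ⟨b, hb0, hbpos, hb⟩ := exists_pos_weights hr
  have eq_diagForm : ∀ B, IsInvariantScalarProduct h l B → B = diagForm b :=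
    fun B hB => hB.eq_diagForm hh.ne' hr hb0 hb
  refine ⟨⟨diagForm b, isInvariantScalarProduct_diagForm hb0 hb, eq_diagForm⟩, fun B hB => ?_⟩
  obtain rfl := eq_diagForm B hB
  exact ⟨fun i j hij => diagForm_single_of_ne b hij,
    fun k => ⟨b k, hbpos k, diagForm_single_self b k⟩⟩
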